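/- Let P be a preorder with a superlinear family of translations Ω that is strict, meaning Ω_0 = id_P and Ω_ε ∘ Ω_ζ = Ω_(ε+ζ) as maps P → P for all ε, ζ ≥ 0. Then for any category D and any functors F, G : P ⥤ D, F and G are weakly ε-interleaved with respect to the induced flow −·Ω on D^P if and only if F and G are Ω_ε-interleaved; consequently d_(D^P, −·Ω)(F, G) = d_Ω(F, G). -/

import Mathlib

open CategoryTheory
open scoped NNReal ENNReal

universe v u

/-- A flow on a category `C`: a lax monoidal action of `([0,∞), ≤, +)` on `C`. -/
structure CatFlow (C : Type u) [Category.{v} C] where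
  /-- the `ε`-translation endofunctors -/
  T : ℝ≥0 → C ⥤ C
  /-- the natural transformations `T ε ⟶ T ζ` for `ε ≤ ζ` -/
  Tle : ∀ {ε ζ : ℝ≥0}, ε ≤ ζ → (T ε ⟶ T ζ)
  Tle_refl : ∀ ε : ℝ≥0, Tle (le_refl ε) = 𝟙 (T ε)
  Tle_trans : ∀ {ε ζ δ : ℝ≥0} (h₁ : ε ≤ ζ) (h₂ : ζ ≤ δ), Tle h₁ ≫ Tle h₂ = Tle (h₁.trans h₂)
  /-- the unit coherence natural transformation `𝟭 C ⟶ T 0` -/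
  u : 𝟭 C ⟶ T 0
  /-- the multiplication coherence transformations; note `(T ζ ⋙ T ε).obj a = (T ε).obj ((T ζ).obj a)`,
  which is the composite `T_ε ∘ T_ζ` of the paper. -/
  μ : ∀ ε ζ : ℝ≥0, T ζ ⋙ T ε ⟶ T (ε + ζ)
  unit_left : ∀ (ε : ℝ≥0) (a : C),
    u.app ((T ε).obj a) ≫ (μ 0 ε).app a = eqToHom (by simp)
  unit_right : ∀ (ε : ℝ≥0) (a : C),
    (T ε).map (u.app a) ≫ (μ ε 0).app a = eqToHom (by simp)
  assoc : ∀ (ε ζ δ : ℝ≥0) (a : C),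
    (μ ε ζ).app ((T δ).obj a) ≫ (μ (ε + ζ) δ).app a
      = (T ε).map ((μ ζ δ).app a) ≫ (μ ε (ζ + δ)).app a ≫ eqToHom (by rw [add_assoc])
  compat : ∀ {ε ζ δ κ : ℝ≥0} (h₁ : ε ≤ δ) (h₂ : ζ ≤ κ) (a : C),
    (μ ε ζ).app a ≫ (Tle (add_le_add h₁ h₂)).app a
      = (T ε).map ((Tle h₂).app a) ≫ (Tle h₁).app ((T κ).obj a) ≫ (μ δ κ).app a

/-- `(φ, ψ)` is a weak `ε`-interleaving of `a` and `b`. -/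
structure IsWeakInterleaving {C : Type u} [Category.{v} C] (F : CatFlow C) (ε : ℝ≥0)
    (a b : C) (φ : a ⟶ (F.T ε).obj b) (ψ : b ⟶ (F.T ε).obj a) : Prop where
  left : φ ≫ (F.T ε).map ψ ≫ (F.μ ε ε).app a
      = F.u.app a ≫ (F.Tle (zero_le : 0 ≤ ε + ε)).app a
  right : ψ ≫ (F.T ε).map φ ≫ (F.μ ε ε).app b
      = F.u.app b ≫ (F.Tle (zero_le : 0 ≤ ε + ε)).app b

/-- `a` and `b` are weakly `ε`-interleaved. -/
def WeaklyInterleaved {C : Type u} [Category.{v} C] (F : CatFlow C) (ε : ℝ≥0) (a b : C) : Prop :=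
  ∃ φ ψ, IsWeakInterleaving F ε a b φ ψ

/-- The interleaving distance associated to a flow. -/
noncomputable def interleavingDist {C : Type u} [Category.{v} C] (F : CatFlow C) (a b : C) :
    ℝ≥0∞ :=
  sInf { x : ℝ≥0∞ | ∃ ε : ℝ≥0, x = ε ∧ WeaklyInterleaved F ε a b }

/-- A superlinear family of translations on a preorder `P`. -/
structure SuperlinearFamily (P : Type u) [Preorder P] where
  /-- the underlying translation maps -/
  Ω : ℝ≥0 → P → P
  mono : ∀ ε : ℝ≥0, Monotone (Ω ε)
  le_self : ∀ (ε : ℝ≥0) (p : P), p ≤ Ω ε p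
  mono_eps : ∀ {ε ζ : ℝ≥0}, ε ≤ ζ → ∀ p : P, Ω ε p ≤ Ω ζ p
  superlinear : ∀ (ε ζ : ℝ≥0) (p : P), Ω ε (Ω ζ p) ≤ Ω (ε + ζ) p
universe v₂ u₂

section InducedFlow

variable {P : Type u} [Preorder P] {D : Type u₂} [Category.{v₂} D]

private lemma map_homOfLE_comp_eq_eqToHom (F : P ⥤ D) {p q r : P} (h₁ : p ≤ q) (h₂ : q ≤ r)
    (hpr : p = r) :
    F.map (homOfLE h₁) ≫ F.map (homOfLE h₂) = eqToHom (congrArg F.obj hpr) := by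
  subst hpr
  rw [← F.map_comp, show homOfLE h₁ ≫ homOfLE h₂ = 𝟙 p from Subsingleton.elim _ _,
    F.map_id, eqToHom_refl]

/-- The flow induced on a functor category `P ⥤ D` ("generalized persistence modules")
by a superlinear family of translations on the preorder `P`, given by precomposition. -/
def SuperlinearFamily.inducedFlow (S : SuperlinearFamily P) (D : Type u₂) [Category.{v₂} D] :
    CatFlow (P ⥤ D) where
  T ε := (Functor.whiskeringLeft P P D).obj (S.mono ε).functor
  Tle {ε ζ} h :=
    { app := fun F =>
        { app := fun p => F.map (homOfLE (S.mono_eps h p))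
          naturality := fun p q hpq => by
            dsimp
            repeat erw [← F.map_comp]
            exact congrArg F.map (Subsingleton.elim _ _) }
      naturality := fun F G α => by
        ext p
        exact (α.naturality _).symm }
  Tle_refl ε := by
    ext F p
    dsimp
    simp
  Tle_trans h₁ h₂ := by
    ext F p
    dsimp
    rw [← F.map_comp]
    exact congrArg F.map (Subsingleton.elim _ _)
  u :=
    { app := fun F =>
        { app := fun p => F.map (homOfLE (S.le_self 0 p))
          naturality := fun p q hpq => by
            dsimp
            repeat erw [← F.map_comp]
            exact congrArg F.map (Subsingleton.elim _ _) }
      naturality := fun F G α => by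
        ext p
        exact (α.naturality _).symm }
  μ ε ζ :=
    { app := fun F =>
        { app := fun p => F.map (homOfLE ((S.superlinear ζ ε p).trans
            (S.mono_eps (le_of_eq (add_comm ζ ε)) p)))
          naturality := fun p q hpq => by
            dsimp
            repeat erw [← F.map_comp]
            exact congrArg F.map (Subsingleton.elim _ _) }
      naturality := fun F G α => by
        ext p
        exact (α.naturality _).symm }
  unit_left ε F := by
    ext p
    simp only [NatTrans.comp_app, eqToHom_app]
    dsimp
    exact map_homOfLE_comp_eq_eqToHom F _ _ (by rw [zero_add])
  unit_right ε F := by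
    ext p
    simp only [NatTrans.comp_app, eqToHom_app]
    dsimp
    exact map_homOfLE_comp_eq_eqToHom F _ _ (by rw [add_zero])
  assoc ε ζ δ F := by
    ext p
    simp only [NatTrans.comp_app, eqToHom_app]
    dsimp
    rw [show (eqToHom (by rw [add_assoc]) :
        F.obj (S.Ω (ε + (ζ + δ)) p) ⟶ F.obj (S.Ω (ε + ζ + δ) p)) =
        F.map (eqToHom (by rw [add_assoc])) from (eqToHom_map F _).symm]
    repeat erw [← F.map_comp]
    exact congrArg F.map (Subsingleton.elim _ _)
  compat h₁ h₂ F := by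
    ext p
    simp only [NatTrans.comp_app]
    dsimp
    repeat erw [← F.map_comp]
    exact congrArg F.map (Subsingleton.elim _ _)

end InducedFlow

/-- An `Ω_ε`-interleaving of generalized persistence modules `F, G : P ⥤ D`
(Bubenik–de Silva–Scott style). -/
structure OmegaInterleaving {P : Type u} [Preorder P] {D : Type u₂} [Category.{v₂} D]
    (S : SuperlinearFamily P) (ε : ℝ≥0) (F G : P ⥤ D) where
  φ : F ⟶ (S.mono ε).functor ⋙ G
  ψ : G ⟶ (S.mono ε).functor ⋙ F
  left : ∀ p : P, φ.app p ≫ ψ.app (S.Ω ε p)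
      = F.map (homOfLE ((S.le_self ε p).trans (S.le_self ε (S.Ω ε p))))
  right : ∀ p : P, ψ.app p ≫ φ.app (S.Ω ε p)
      = G.map (homOfLE ((S.le_self ε p).trans (S.le_self ε (S.Ω ε p))))

/-- `F` and `G` are `Ω_ε`-interleaved. -/
def OmegaInterleaved {P : Type u} [Preorder P] {D : Type u₂} [Category.{v₂} D]
    (S : SuperlinearFamily P) (ε : ℝ≥0) (F G : P ⥤ D) : Prop :=
  Nonempty (OmegaInterleaving S ε F G)

/-- The interleaving distance `d_Ω` of generalized persistence modules. -/
noncomputable def dOmega {P : Type u} [Preorder P] {D : Type u₂} [Category.{v₂} D]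
    (S : SuperlinearFamily P) (F G : P ⥤ D) : ℝ≥0∞ :=
  sInf { x : ℝ≥0∞ | ∃ ε : ℝ≥0, x = ε ∧ OmegaInterleaved S ε F G }

/-!
Unfolding the induced flow, the weak interleaving equation for `(φ, ψ)` says, at each `p`, that
`φ_p ≫ ψ_{Ω_ε p}` followed by the comparison map `F (Ω_ε (Ω_ε p)) ⟶ F (Ω_{2ε} p)` is
`F (p ≤ Ω_{2ε} p)`. An `Ω_ε`-interleaving always gives this. Conversely, when
`Ω_ε ∘ Ω_ε = Ω_{2ε}` the comparison map is the image of an isomorphism of the preorder, so it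
can be cancelled, which leaves exactly the `Ω_ε`-interleaving equation.
-/

lemma CategoryTheory.isIso_homOfLE_of_ge {X : Type u} [Preorder X] {x y : X} (h : x ≤ y)
    (h' : y ≤ x) : IsIso (homOfLE h) :=
  ⟨homOfLE h', Subsingleton.elim _ _, Subsingleton.elim _ _⟩

lemma CategoryTheory.Functor.comp_map_homOfLE_eq_map_homOfLE_iff {P : Type u} [Preorder P]
    {D : Type u₂} [Category.{v₂} D] (F : P ⥤ D) {p q r : P} (hpq : p ≤ q) (hqr : q ≤ r)
    (hrq : r ≤ q) (f : F.obj p ⟶ F.obj q) :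
    f ≫ F.map (homOfLE hqr) = F.map (homOfLE (hpq.trans hqr)) ↔ f = F.map (homOfLE hpq) := by
  have := isIso_homOfLE_of_ge hqr hrq
  rw [← homOfLE_comp hpq hqr, F.map_comp, cancel_mono]

namespace SuperlinearFamily

variable {P : Type u} [Preorder P] {D : Type u₂} [Category.{v₂} D] (S : SuperlinearFamily P)
  {ε : ℝ≥0}

lemma inducedFlow_interleaving_eq_iff {F G : P ⥤ D} (φ : F ⟶ (S.mono ε).functor ⋙ G)
    (ψ : G ⟶ (S.mono ε).functor ⋙ F) :
    φ ≫ ((S.inducedFlow D).T ε).map ψ ≫ ((S.inducedFlow D).μ ε ε).app F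
        = (S.inducedFlow D).u.app F ≫ ((S.inducedFlow D).Tle (zero_le : 0 ≤ ε + ε)).app F ↔
      ∀ p : P, φ.app p ≫ ψ.app (S.Ω ε p) ≫ F.map (homOfLE (S.superlinear ε ε p))
        = F.map (homOfLE (S.le_self (ε + ε) p)) := by
  refine NatTrans.ext_iff.trans (funext_iff.trans (forall_congr' fun p => ?_))
  have hunit : F.map (homOfLE (S.le_self 0 p)) ≫
      F.map (homOfLE (S.mono_eps (zero_le : 0 ≤ ε + ε) p)) = F.map (homOfLE (S.le_self (ε + ε) p)) := by
    rw [← F.map_comp, homOfLE_comp]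
  exact Iff.of_eq (congrArg (Eq _) hunit)

end SuperlinearFamily

namespace OmegaInterleaving

variable {P : Type u} [Preorder P] {D : Type u₂} [Category.{v₂} D] {S : SuperlinearFamily P}
  {ε : ℝ≥0} {F G : P ⥤ D}

lemma isWeakInterleaving (I : OmegaInterleaving S ε F G) :
    IsWeakInterleaving (S.inducedFlow D) ε F G I.φ I.ψ where
  left := (S.inducedFlow_interleaving_eq_iff I.φ I.ψ).2 fun p =>
    calc _ = (I.φ.app p ≫ I.ψ.app (S.Ω ε p)) ≫ F.map (homOfLE (S.superlinear ε ε p)) :=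
            (Category.assoc _ _ _).symm
      _ = _ := by rw [I.left p]; exact (F.map_comp _ _).symm
  right := (S.inducedFlow_interleaving_eq_iff I.ψ I.φ).2 fun p =>
    calc _ = (I.ψ.app p ≫ I.φ.app (S.Ω ε p)) ≫ G.map (homOfLE (S.superlinear ε ε p)) :=
            (Category.assoc _ _ _).symm
      _ = _ := by rw [I.right p]; exact (G.map_comp _ _).symm

def ofIsWeakInterleaving (hε : ∀ p : P, S.Ω (ε + ε) p ≤ S.Ω ε (S.Ω ε p))
    {φ : F ⟶ (S.mono ε).functor ⋙ G} {ψ : G ⟶ (S.mono ε).functor ⋙ F}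
    (h : IsWeakInterleaving (S.inducedFlow D) ε F G φ ψ) : OmegaInterleaving S ε F G where
  φ := φ
  ψ := ψ
  left p := (F.comp_map_homOfLE_eq_map_homOfLE_iff _ (S.superlinear ε ε p) (hε p) _).1 <|
    (Category.assoc _ _ _).trans ((S.inducedFlow_interleaving_eq_iff φ ψ).1 h.left p)
  right p := (G.comp_map_homOfLE_eq_map_homOfLE_iff _ (S.superlinear ε ε p) (hε p) _).1 <|
    (Category.assoc _ _ _).trans ((S.inducedFlow_interleaving_eq_iff ψ φ).1 h.right p)

end OmegaInterleaving

theorem strict_weaklyInterleaved_iff_omegaInterleaved_general {P : Type u} [Preorder P]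
    {D : Type u₂} [Category.{v₂} D] (S : SuperlinearFamily P)
    (hadd : ∀ ε ζ : ℝ≥0, S.Ω ε ∘ S.Ω ζ = S.Ω (ε + ζ))
    (F G : P ⥤ D) :
    (∀ ε : ℝ≥0, WeaklyInterleaved (S.inducedFlow D) ε F G ↔ OmegaInterleaved S ε F G) ∧
    interleavingDist (S.inducedFlow D) F G = dOmega S F G := by
  have key (ε : ℝ≥0) : WeaklyInterleaved (S.inducedFlow D) ε F G ↔ OmegaInterleaved S ε F G :=
    ⟨fun ⟨_, _, h⟩ => ⟨.ofIsWeakInterleaving (fun p => (congrFun (hadd ε ε) p).ge) h⟩,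
      fun ⟨I⟩ => ⟨I.φ, I.ψ, I.isWeakInterleaving⟩⟩
  exact ⟨key, by simp only [interleavingDist, dOmega, key]⟩

/-- For a *strict* superlinear family of translations (`Ω 0 = id` and
`Ω ε ∘ Ω ζ = Ω (ε+ζ)` as maps `P → P`), weak `ε`-interleavings for the induced flow on
`D^P` coincide with `Ω_ε`-interleavings, and the two interleaving distances agree. -/
theorem strict_weaklyInterleaved_iff_omegaInterleaved {P : Type u} [Preorder P]
    {D : Type u₂} [Category.{v₂} D] (S : SuperlinearFamily P)
    (h0 : S.Ω 0 = id) (hadd : ∀ ε ζ : ℝ≥0, S.Ω ε ∘ S.Ω ζ = S.Ω (ε + ζ))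
    (F G : P ⥤ D) :
    (∀ ε : ℝ≥0, WeaklyInterleaved (S.inducedFlow D) ε F G ↔ OmegaInterleaved S ε F G) ∧
    interleavingDist (S.inducedFlow D) F G = dOmega S F G :=
  strict_weaklyInterleaved_iff_omegaInterleaved_general S hadd F G
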